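/- Let b(j; m, p) = C(m,j) p^j (1-p)^{m-j} and F_b(r; s, p) = Σ_{i=0}^{r} b(i; s, p) for 0 ≤ r ≤ s (and 0 for r < 0). Then the probability that 2m i.i.d. Bernoulli(p) trials contain no window of m consecutive trials with k or more successes, for 2 < k < 2m, equals Q_2' = F_b(k-1; m, p)² - (k-1) b(k; m, p) F_b(k-2; m, p) + m p b(k; m, p) F_b(k-3; m-1, p). -/

import Mathlib

open MeasureTheory ProbabilityTheory

open Finset

namespace NausAux

def scnt (w : ℕ → Bool) (s t : ℕ) : ℕ := ((Finset.Ico s t).filter (fun j => w j = true)).card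

lemma scnt_split (w : ℕ → Bool) {s u t : ℕ} (h1 : s ≤ u) (h2 : u ≤ t) :
    scnt w s t = scnt w s u + scnt w u t := by
  unfold scnt
  rw [← Finset.Ico_union_Ico_eq_Ico h1 h2, Finset.filter_union,
    Finset.card_union_of_disjoint]
  exact Finset.disjoint_filter_filter (Finset.Ico_disjoint_Ico_consecutive s u t)

lemma scnt_congr {w w' : ℕ → Bool} {s t : ℕ} (h : ∀ j, s ≤ j → j < t → w j = w' j) :
    scnt w s t = scnt w' s t := by
  unfold scnt
  congr 1
  apply Finset.filter_congr
  intro j hj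
  simp only [Finset.mem_Ico] at hj
  rw [h j hj.1 hj.2]

lemma scnt_shift (w : ℕ → Bool) (d s t : ℕ) :
    scnt (fun j => w (d + j)) s t = scnt w (d + s) (d + t) := by
  unfold scnt
  apply Finset.card_bij (fun j _ => d + j)
  · intro a ha
    simp only [Finset.mem_filter, Finset.mem_Ico] at ha ⊢
    exact ⟨⟨by omega, by omega⟩, ha.2⟩
  · intro a ha b hb hab; omega
  · intro b hb
    simp only [Finset.mem_filter, Finset.mem_Ico] at hb
    refine ⟨b - d, ?_, by omega⟩
    simp only [Finset.mem_filter, Finset.mem_Ico]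
    constructor
    · omega
    · have : d + (b - d) = b := by omega
      rw [this]; exact hb.2

lemma scnt_succ (w : ℕ → Bool) (s t : ℕ) (h : s ≤ t) :
    scnt w s (t + 1) = scnt w s t + (if w t = true then 1 else 0) := by
  rw [scnt_split w h (Nat.le_succ t)]
  congr 1
  unfold scnt
  rw [Nat.succ_eq_add_one, Finset.Ico_add_one_right_eq_Icc, Finset.Icc_self]
  split
  · rw [Finset.filter_singleton]; simp_all
  · rw [Finset.filter_singleton]; simp_all

lemma scnt_le (w : ℕ → Bool) (s t : ℕ) : scnt w s t ≤ t - s := by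
  calc ((Finset.Ico s t).filter (fun j => w j = true)).card ≤ (Finset.Ico s t).card :=
        Finset.card_filter_le _ _
    _ = t - s := Nat.card_Ico s t

end NausAux
namespace NausAux

variable {m : ℕ}

def extF {n : ℕ} (y : Fin n → Bool) : ℕ → Bool := fun j => if h : j < n then y ⟨j, h⟩ else false

def cntB (y : Fin m → Bool) (t : ℕ) : ℕ := scnt (extF y) 0 t

def cnt (y : Fin m → Bool) : ℕ := cntB y m

def wseq (y z : Fin m → Bool) : ℕ → Bool := fun j => if j < m then extF y j else extF z (j - m)

def win (y z : Fin m → Bool) (i : ℕ) : ℕ :=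
  ((Finset.range m).filter (fun j => wseq y z (i + j) = true)).card

lemma cntB_mono (y : Fin m → Bool) {s t : ℕ} (h : s ≤ t) : cntB y s ≤ cntB y t := by
  unfold cntB
  rw [scnt_split (extF y) (Nat.zero_le s) h]
  omega

lemma cntB_succ_le (y : Fin m → Bool) (t : ℕ) : cntB y (t + 1) ≤ cntB y t + 1 := by
  unfold cntB
  rw [scnt_succ _ _ _ (Nat.zero_le t)]
  split <;> omega

lemma cntB_zero (y : Fin m → Bool) : cntB y 0 = 0 := by
  unfold cntB scnt; simp

lemma cntB_ge (y : Fin m → Bool) {t : ℕ} (h : m ≤ t) : cntB y t = cnt y := by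
  unfold cntB cnt
  rw [scnt_split (extF y) (Nat.zero_le m) h]
  have : scnt (extF y) m t = 0 := by
    unfold scnt
    rw [Finset.card_eq_zero, Finset.filter_eq_empty_iff]
    intro j hj
    simp only [Finset.mem_Ico] at hj
    unfold extF
    rw [dif_neg (by omega)]
    simp
  unfold cntB
  omega

lemma cnt_le (y : Fin m → Bool) : cnt y ≤ m := by
  have := scnt_le (extF y) 0 m
  unfold cnt cntB; omega

lemma win_eq_scnt (y z : Fin m → Bool) (i : ℕ) : win y z i = scnt (wseq y z) i (i + m) := by
  unfold win scnt
  apply Finset.card_bij (fun j _ => i + j)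
  · intro a ha
    simp only [Finset.mem_filter, Finset.mem_range, Finset.mem_Ico] at ha ⊢
    exact ⟨⟨by omega, by omega⟩, ha.2⟩
  · intro a _ b _ hab; omega
  · intro b hb
    simp only [Finset.mem_filter, Finset.mem_range, Finset.mem_Ico] at hb
    refine ⟨b - i, ?_, by omega⟩
    simp only [Finset.mem_filter, Finset.mem_range]
    constructor
    · omega
    · have : i + (b - i) = b := by omega
      rw [this]; exact hb.2

lemma win_add (y z : Fin m → Bool) {i : ℕ} (hi : i ≤ m) :
    win y z i + cntB y i = cnt y + cntB z i := by
  rw [win_eq_scnt]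
  rw [scnt_split (wseq y z) (show i ≤ m by omega) (by omega)]
  have h1 : scnt (wseq y z) i m = scnt (extF y) i m := by
    apply scnt_congr
    intro j _ hj
    unfold wseq
    rw [if_pos hj]
  have h2 : scnt (wseq y z) m (i + m) = cntB z i := by
    have : scnt (wseq y z) m (i + m) = scnt (wseq y z) (m + 0) (m + i) := by
      congr 1 <;> omega
    rw [this, ← scnt_shift]
    unfold cntB
    apply scnt_congr
    intro j _ _
    unfold wseq
    rw [if_neg (by omega)]
    congr 1
    omega
  have h3 : cnt y = cntB y i + scnt (extF y) i m := by
    unfold cnt cntB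
    rw [scnt_split (extF y) (Nat.zero_le i) hi]
  omega

lemma win_zero (y z : Fin m → Bool) : win y z 0 = cnt y := by
  have := win_add y z (Nat.zero_le m)
  rw [cntB_zero, cntB_zero] at this
  omega

lemma win_m (y z : Fin m → Bool) : win y z m = cnt z := by
  have := win_add y z (le_refl m)
  have h1 : cntB y m = cnt y := rfl
  have h2 : cntB z m = cnt z := rfl
  omega

lemma win_le (y z : Fin m → Bool) (i : ℕ) : win y z i ≤ m := by
  rw [win_eq_scnt]
  have := scnt_le (wseq y z) i (i + m)
  omega

end NausAux
namespace NausAux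

variable {m : ℕ}

/-- The path-hit predicate: at time `t ≤ m` the second path exceeds the first by `d`. -/
def P (d : ℕ) (y z : Fin m → Bool) (t : ℕ) : Prop := t ≤ m ∧ d + cntB y t ≤ cntB z t

instance (d : ℕ) (y z : Fin m → Bool) : DecidablePred (P d y z) := fun _ =>
  instDecidableAnd

def Hit (d : ℕ) (y z : Fin m → Bool) : Prop := ∃ t, P d y z t

instance (d : ℕ) (y z : Fin m → Bool) : Decidable (Hit d y z) :=
  decidable_of_iff (∃ t ≤ m, d + cntB y t ≤ cntB z t) (by
    constructor
    · rintro ⟨t, h1, h2⟩; exact ⟨t, h1, h2⟩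
    · rintro ⟨t, h1, h2⟩; exact ⟨t, h1, h2⟩)

/-- first hitting time (0 if no hit) -/
def tau (d : ℕ) (y z : Fin m → Bool) : ℕ :=
  if h : Hit d y z then Nat.find h else 0

lemma tau_spec {d : ℕ} {y z : Fin m → Bool} (h : Hit d y z) : P d y z (tau d y z) := by
  rw [tau, dif_pos h]; exact Nat.find_spec h

lemma tau_min {d : ℕ} {y z : Fin m → Bool} (h : Hit d y z) {t : ℕ} (ht : t < tau d y z) :
    ¬ P d y z t := by
  rw [tau, dif_pos h] at ht
  exact Nat.find_min h ht

lemma tau_le_m {d : ℕ} {y z : Fin m → Bool} (h : Hit d y z) : tau d y z ≤ m :=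
  (tau_spec h).1

lemma tau_pos {d : ℕ} {y z : Fin m → Bool} (h : Hit d y z) (hd : 1 ≤ d) : 1 ≤ tau d y z := by
  by_contra hc
  have h0 : tau d y z = 0 := by omega
  have hh := tau_spec h
  rw [h0] at hh
  have h1 := cntB_zero y
  have h2 := cntB_zero z
  have := hh.2
  omega

/-- at the first hitting time we have exact equality -/
lemma tau_eq {d : ℕ} {y z : Fin m → Bool} (h : Hit d y z) (hd : 1 ≤ d) :
    cntB z (tau d y z) = d + cntB y (tau d y z) := by
  have h1 : 1 ≤ tau d y z := tau_pos h hd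
  have hs := tau_spec h
  have hmin := tau_min h (show tau d y z - 1 < tau d y z by omega)
  rw [P] at hmin
  push_neg at hmin
  have hB : cntB z (tau d y z - 1) < d + cntB y (tau d y z - 1) :=
    hmin (le_trans (by omega) hs.1)
  have e1 : cntB z (tau d y z) ≤ cntB z (tau d y z - 1) + 1 := by
    have e := cntB_succ_le z (tau d y z - 1)
    have e' : tau d y z - 1 + 1 = tau d y z := by omega
    rw [e'] at e
    exact e
  have e2 : cntB y (tau d y z - 1) ≤ cntB y (tau d y z) := cntB_mono y (by omega)
  have := hs.2
  omega

/-- swap the two strings from position `τ` on -/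
def mix (τ : ℕ) (y z : Fin m → Bool) : Fin m → Bool :=
  fun j => if (j : ℕ) < τ then y j else z j

lemma extF_mix_lt {τ : ℕ} {y z : Fin m → Bool} {j : ℕ} (hj : j < τ) :
    extF (mix τ y z) j = extF y j := by
  unfold extF mix
  split
  · rfl
  · rfl

lemma extF_mix_ge {τ : ℕ} {y z : Fin m → Bool} {j : ℕ} (hj : τ ≤ j) :
    extF (mix τ y z) j = extF z j := by
  unfold extF mix
  split
  · split
    · rename_i hc; exact absurd (show j < τ from hc) (by omega)
    · rfl
  · rfl

lemma cntB_mix_le {τ : ℕ} (y z : Fin m → Bool) {t : ℕ} (ht : t ≤ τ) :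
    cntB (mix τ y z) t = cntB y t := by
  unfold cntB
  exact scnt_congr fun j _ hj => extF_mix_lt (by omega)

lemma cntB_mix_ge {τ : ℕ} (y z : Fin m → Bool) {t : ℕ} (ht : τ ≤ t) :
    cntB (mix τ y z) t + cntB z τ = cntB y τ + cntB z t := by
  have h1 : cntB (mix τ y z) t = cntB (mix τ y z) τ + scnt (extF (mix τ y z)) τ t := by
    unfold cntB
    exact scnt_split _ (Nat.zero_le τ) ht
  have h2 : scnt (extF (mix τ y z)) τ t = scnt (extF z) τ t :=
    scnt_congr fun j hj _ => extF_mix_ge hj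
  have h3 : cntB z t = cntB z τ + scnt (extF z) τ t := by
    unfold cntB
    exact scnt_split _ (Nat.zero_le τ) ht
  have h4 : cntB (mix τ y z) τ = cntB y τ := cntB_mix_le y z (le_refl τ)
  omega

/-- the reflection map -/
def Phi (d : ℕ) (q : (Fin m → Bool) × (Fin m → Bool)) :
    (Fin m → Bool) × (Fin m → Bool) :=
  (mix (tau d q.1 q.2) q.1 q.2, mix (tau d q.1 q.2) q.2 q.1)

end NausAux
namespace NausAux

variable {m : ℕ}


variable {d : ℕ} {y z : Fin m → Bool}

lemma cnt_Phi1 (h : Hit d y z) (hd : 1 ≤ d) : cnt (mix (tau d y z) y z) + d = cnt z := by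
  have h1 := cntB_mix_ge (τ := tau d y z) y z (tau_le_m h)
  have h2 := tau_eq h hd
  have h3 : cntB (mix (tau d y z) y z) m = cnt (mix (tau d y z) y z) := rfl
  have h4 : cntB z m = cnt z := rfl
  omega

lemma cnt_Phi2 (h : Hit d y z) (hd : 1 ≤ d) : cnt (mix (tau d y z) z y) = cnt y + d := by
  have h1 := cntB_mix_ge (τ := tau d y z) z y (tau_le_m h)
  have h2 := tau_eq h hd
  have h3 : cntB (mix (tau d y z) z y) m = cnt (mix (tau d y z) z y) := rfl
  have h4 : cntB y m = cnt y := rfl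
  omega

lemma hit_Phi (h : Hit d y z) (hd : 1 ≤ d) :
    Hit d (mix (tau d y z) y z) (mix (tau d y z) z y) := by
  refine ⟨tau d y z, tau_le_m h, ?_⟩
  rw [cntB_mix_le y z (le_refl _), cntB_mix_le z y (le_refl _)]
  rw [tau_eq h hd]

lemma tau_unique {t : ℕ} (h : Hit d y z) (hP : P d y z t) (hmin : ∀ s < t, ¬ P d y z s) :
    tau d y z = t := by
  rw [tau, dif_pos h]
  exact (Nat.find_eq_iff h).2 ⟨hP, hmin⟩

lemma tau_Phi (h : Hit d y z) (hd : 1 ≤ d) :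
    tau d (mix (tau d y z) y z) (mix (tau d y z) z y) = tau d y z := by
  have h' := hit_Phi h hd
  apply tau_unique h'
  · refine ⟨tau_le_m h, ?_⟩
    rw [cntB_mix_le y z (le_refl _), cntB_mix_le z y (le_refl _)]
    rw [tau_eq h hd]
  · intro s hs hP
    obtain ⟨hsm, hle⟩ := hP
    rw [cntB_mix_le y z (le_of_lt hs), cntB_mix_le z y (le_of_lt hs)] at hle
    exact tau_min h hs ⟨hsm, hle⟩

lemma Phi_invol (h : Hit d y z) (hd : 1 ≤ d) : Phi d (Phi d (y, z)) = (y, z) := by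
  unfold Phi
  simp only
  rw [tau_Phi h hd]
  refine Prod.ext ?_ ?_ <;> (funext j; unfold mix; by_cases hj : (j : ℕ) < tau d y z)
  · simp only [if_pos hj]
  · simp only [if_neg hj]
  · simp only [if_pos hj]
  · simp only [if_neg hj]


end NausAux
namespace NausAux

variable {m : ℕ}

lemma cnt_eq_card (y : Fin m → Bool) :
    cnt y = (Finset.univ.filter (fun j : Fin m => y j = true)).card := by
  unfold cnt cntB scnt
  have himg : (Finset.Ico 0 m).filter (fun j => extF y j = true)
      = (Finset.univ.filter (fun j : Fin m => y j = true)).image Fin.val := by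
    ext j
    simp only [Finset.mem_filter, Finset.mem_Ico, Finset.mem_image, Finset.mem_univ, true_and]
    constructor
    · rintro ⟨⟨-, hj⟩, hy⟩
      refine ⟨⟨j, hj⟩, ?_, rfl⟩
      unfold extF at hy
      rwa [dif_pos hj] at hy
    · rintro ⟨j', hy, rfl⟩
      refine ⟨⟨Nat.zero_le _, j'.2⟩, ?_⟩
      unfold extF
      rw [dif_pos j'.2]
      convert hy
  rw [himg, Finset.card_image_of_injective _ Fin.val_injective]

lemma card_cnt_eq (g : ℕ) :
    (Finset.univ.filter (fun y : Fin m → Bool => cnt y = g)).card = m.choose g := by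
  have : (Finset.univ.filter (fun y : Fin m → Bool => cnt y = g)).card
      = (Finset.powersetCard g (Finset.univ : Finset (Fin m))).card := by
    apply Finset.card_bij' (fun y _ => Finset.univ.filter (fun j : Fin m => y j = true))
      (fun s _ => fun j => decide (j ∈ s))
    · intro y hy
      rw [Finset.mem_filter] at hy
      rw [Finset.mem_powersetCard_univ, ← cnt_eq_card]
      exact hy.2.symm ▸ rfl
    · intro s hs
      rw [Finset.mem_powersetCard_univ] at hs
      rw [Finset.mem_filter]
      refine ⟨Finset.mem_univ _, ?_⟩
      rw [cnt_eq_card, ← hs]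
      congr 1
      ext j
      simp
    · intro y _
      funext j
      by_cases hj : y j = true
      · simp [hj]
      · simp only [Bool.not_eq_true] at hj
        simp [hj]
    · intro s _
      ext j
      simp
  rw [this, Finset.card_powersetCard, Finset.card_univ, Fintype.card_fin]

variable (p : ℝ)

def wt (y : Fin m → Bool) : ℝ := ∏ j : Fin m, (if y j = true then p else 1 - p)

lemma wt_eq (y : Fin m → Bool) : wt p y = p ^ cnt y * (1 - p) ^ (m - cnt y) := by
  unfold wt
  rw [← Finset.prod_filter_mul_prod_filter_not Finset.univ (fun j => y j = true)]
  have h1 : ∀ j ∈ Finset.univ.filter (fun j : Fin m => y j = true),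
      (if y j = true then p else 1 - p) = p := by
    intro j hj
    rw [Finset.mem_filter] at hj
    rw [if_pos hj.2]
  have h2 : ∀ j ∈ Finset.univ.filter (fun j : Fin m => ¬ y j = true),
      (if y j = true then p else 1 - p) = 1 - p := by
    intro j hj
    rw [Finset.mem_filter] at hj
    rw [if_neg hj.2]
  rw [Finset.prod_congr rfl h1, Finset.prod_congr rfl h2, Finset.prod_const, Finset.prod_const]
  have hc := Finset.card_filter_add_card_filter_not (s := (Finset.univ : Finset (Fin m)))
    (p := fun j : Fin m => y j = true)
  rw [Finset.card_univ, Fintype.card_fin] at hc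
  rw [← cnt_eq_card] at hc
  have hcnt : (Finset.univ.filter (fun j : Fin m => ¬ y j = true)).card = m - cnt y := by omega
  rw [← cnt_eq_card, hcnt]

lemma wt_nonneg (hp0 : 0 ≤ p) (hp1 : p ≤ 1) (y : Fin m → Bool) : 0 ≤ wt p y := by
  unfold wt
  apply Finset.prod_nonneg
  intro j _
  split
  · exact hp0
  · linarith

end NausAux
namespace NausAux

variable {m : ℕ}

def BadW (k : ℕ) (y z : Fin m → Bool) : Prop := ∃ i, i ≤ m ∧ k ≤ win y z i

instance (k : ℕ) (y z : Fin m → Bool) : Decidable (BadW k y z) :=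
  decidable_of_iff (((Finset.range (m + 1)).filter (fun i => k ≤ win y z i)).Nonempty) (by
    constructor
    · rintro ⟨i, hi⟩
      rw [Finset.mem_filter, Finset.mem_range] at hi
      exact ⟨i, by omega, hi.2⟩
    · rintro ⟨i, h1, h2⟩
      exact ⟨i, Finset.mem_filter.2 ⟨Finset.mem_range.2 (by omega), h2⟩⟩)

lemma badW_iff_hit {k a : ℕ} {y z : Fin m → Bool} (ha : cnt y = a) (hak : a < k) :
    BadW k y z ↔ Hit (k - a) y z := by
  constructor
  · rintro ⟨i, him, hwin⟩
    refine ⟨i, him, ?_⟩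
    have := win_add y z him
    omega
  · rintro ⟨t, htm, hle⟩
    refine ⟨t, htm, ?_⟩
    have := win_add y z htm
    omega

lemma card_bad (k a c : ℕ) (hak : a < k) (hck : c < k) :
    (Finset.univ.filter (fun q : (Fin m → Bool) × (Fin m → Bool) =>
        cnt q.1 = a ∧ cnt q.2 = c ∧ BadW k q.1 q.2)).card
    = (Finset.univ.filter (fun q : (Fin m → Bool) × (Fin m → Bool) =>
        cnt q.1 + k = a + c ∧ cnt q.2 = k)).card := by
  set d := k - a with hdd
  have hd : 1 ≤ d := by omega
  have hk : k = a + d := by omega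
  apply Finset.card_bij' (fun q _ => Phi d q) (fun q _ => Phi d q)
  · -- forward membership
    rintro ⟨y, z⟩ hq
    rw [Finset.mem_filter] at hq
    dsimp only at hq
    obtain ⟨-, ha, hc, hbad⟩ := hq
    have hHit : Hit d y z := (badW_iff_hit ha hak).1 hbad
    rw [Finset.mem_filter]
    refine ⟨Finset.mem_univ _, ?_, ?_⟩
    · have := cnt_Phi1 hHit hd
      show cnt (mix (tau d y z) y z) + k = a + c
      omega
    · have := cnt_Phi2 hHit hd
      show cnt (mix (tau d y z) z y) = k
      omega
  · -- backward membership
    rintro ⟨y, z⟩ hq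
    rw [Finset.mem_filter] at hq
    dsimp only at hq
    obtain ⟨-, ha', hc'⟩ := hq
    have hHit : Hit d y z := by
      refine ⟨m, le_refl m, ?_⟩
      have h1 : cntB y m = cnt y := rfl
      have h2 : cntB z m = cnt z := rfl
      omega
    rw [Finset.mem_filter]
    have e1 := cnt_Phi1 hHit hd
    have e2 := cnt_Phi2 hHit hd
    have g1 : cnt (mix (tau d y z) y z) = a := by omega
    refine ⟨Finset.mem_univ _, g1, (show cnt (mix (tau d y z) z y) = c by omega), ?_⟩
    apply (badW_iff_hit (y := mix (tau d y z) y z) (z := mix (tau d y z) z y) g1 hak).2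
    rw [← hdd]
    exact hit_Phi hHit hd
  · -- left inverse
    rintro ⟨y, z⟩ hq
    rw [Finset.mem_filter] at hq
    dsimp only at hq
    obtain ⟨-, ha, hc, hbad⟩ := hq
    exact Phi_invol ((badW_iff_hit ha hak).1 hbad) hd
  · -- right inverse
    rintro ⟨y, z⟩ hq
    rw [Finset.mem_filter] at hq
    dsimp only at hq
    obtain ⟨-, ha', hc'⟩ := hq
    have hHit : Hit d y z := by
      refine ⟨m, le_refl m, ?_⟩
      have h1 : cntB y m = cnt y := rfl
      have h2 : cntB z m = cnt z := rfl
      omega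
    exact Phi_invol hHit hd

end NausAux
namespace NausAux

variable {m : ℕ} (p : ℝ)

lemma sum_wt_cnt (g : ℕ) :
    ∑ y ∈ Finset.univ.filter (fun y : Fin m → Bool => cnt y = g), wt p y
      = (m.choose g : ℝ) * (p ^ g * (1 - p) ^ (m - g)) := by
  have h : ∀ y ∈ Finset.univ.filter (fun y : Fin m → Bool => cnt y = g),
      wt p y = p ^ g * (1 - p) ^ (m - g) := by
    intro y hy
    rw [Finset.mem_filter] at hy
    rw [wt_eq, hy.2]
  rw [Finset.sum_congr rfl h, Finset.sum_const, card_cnt_eq, nsmul_eq_mul]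

lemma sum_wt_lt (K : ℕ) :
    ∑ y ∈ Finset.univ.filter (fun y : Fin m → Bool => cnt y < K), wt p y
      = ∑ a ∈ Finset.range K, (m.choose a : ℝ) * (p ^ a * (1 - p) ^ (m - a)) := by
  rw [← Finset.sum_fiberwise_of_maps_to (g := cnt)
    (t := Finset.range K) (fun y hy => by
      rw [Finset.mem_filter] at hy
      exact Finset.mem_range.2 hy.2)]
  apply Finset.sum_congr rfl
  intro a ha
  rw [Finset.mem_range] at ha
  rw [← sum_wt_cnt]
  congr 1
  rw [Finset.filter_filter]
  apply Finset.filter_congr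
  intro y _
  constructor
  · rintro ⟨-, h⟩; exact h
  · intro h; exact ⟨by omega, h⟩

lemma goodP_lt {k : ℕ} {y z : Fin m → Bool} (h : ¬ BadW k y z) : cnt y < k ∧ cnt z < k := by
  constructor
  · by_contra hc
    exact h ⟨0, Nat.zero_le m, by rw [win_zero]; omega⟩
  · by_contra hc
    exact h ⟨m, le_refl m, by rw [win_m]; omega⟩

end NausAux
namespace NausAux

variable {m : ℕ} (p : ℝ)

/-- number of target configurations -/
def Nc (m k a c : ℕ) : ℕ := (Finset.univ.filter (fun q : (Fin m → Bool) × (Fin m → Bool) =>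
    cnt q.1 + k = a + c ∧ cnt q.2 = k)).card

lemma Nc_eq (k a c : ℕ) : Nc m k a c = if k ≤ a + c then m.choose (a + c - k) * m.choose k else 0 := by
  unfold Nc
  rw [← Finset.univ_product_univ,
    Finset.filter_product (fun y : Fin m → Bool => cnt y + k = a + c)
      (fun z : Fin m → Bool => cnt z = k)]
  rw [Finset.card_product]
  split
  · rename_i hle
    rw [card_cnt_eq]
    congr 1
    have : (Finset.univ.filter (fun y : Fin m → Bool => cnt y + k = a + c))
        = (Finset.univ.filter (fun y : Fin m → Bool => cnt y = a + c - k)) := by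
      apply Finset.filter_congr
      intro y _
      constructor
      · intro h; omega
      · intro h; omega
    rw [this, card_cnt_eq]
  · rename_i hlt
    convert MulZeroClass.zero_mul _
    rw [Finset.card_eq_zero, Finset.filter_eq_empty_iff]
    intro y _
    omega

lemma sum_bad (k : ℕ) :
    ∑ q ∈ Finset.univ.filter (fun q : (Fin m → Bool) × (Fin m → Bool) =>
        (cnt q.1 < k ∧ cnt q.2 < k) ∧ BadW k q.1 q.2), wt p q.1 * wt p q.2
      = ∑ ac ∈ Finset.range k ×ˢ Finset.range k,
          (Nc m k ac.1 ac.2 : ℝ) * (p ^ ac.1 * (1 - p) ^ (m - ac.1)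
            * (p ^ ac.2 * (1 - p) ^ (m - ac.2))) := by
  rw [← Finset.sum_fiberwise_of_maps_to (g := fun q => (cnt q.1, cnt q.2))
    (t := Finset.range k ×ˢ Finset.range k) (fun q hq => by
      rw [Finset.mem_filter] at hq
      rw [Finset.mem_product, Finset.mem_range, Finset.mem_range]
      exact hq.2.1)]
  apply Finset.sum_congr rfl
  intro ac hac
  rw [Finset.mem_product, Finset.mem_range, Finset.mem_range] at hac
  obtain ⟨a, c⟩ := ac
  obtain ⟨ha, hc⟩ := hac
  have hfib : (Finset.univ.filter (fun q : (Fin m → Bool) × (Fin m → Bool) =>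
      (cnt q.1 < k ∧ cnt q.2 < k) ∧ BadW k q.1 q.2)).filter
        (fun q => (cnt q.1, cnt q.2) = (a, c))
      = Finset.univ.filter (fun q : (Fin m → Bool) × (Fin m → Bool) =>
          cnt q.1 = a ∧ cnt q.2 = c ∧ BadW k q.1 q.2) := by
    rw [Finset.filter_filter]
    apply Finset.filter_congr
    intro q _
    rw [Prod.mk.injEq]
    constructor
    · rintro ⟨⟨-, hb⟩, h1, h2⟩; exact ⟨h1, h2, hb⟩
    · rintro ⟨h1, h2, hb⟩; exact ⟨⟨⟨by omega, by omega⟩, hb⟩, h1, h2⟩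
  rw [hfib]
  have hconst : ∀ q ∈ Finset.univ.filter (fun q : (Fin m → Bool) × (Fin m → Bool) =>
      cnt q.1 = a ∧ cnt q.2 = c ∧ BadW k q.1 q.2),
      wt p q.1 * wt p q.2 = p ^ a * (1 - p) ^ (m - a) * (p ^ c * (1 - p) ^ (m - c)) := by
    intro q hq
    rw [Finset.mem_filter] at hq
    rw [wt_eq, wt_eq, hq.2.1, hq.2.2.1]
  rw [Finset.sum_congr rfl hconst, Finset.sum_const, card_bad k a c ha hc, nsmul_eq_mul]
  rfl

lemma sum_good (k : ℕ) (hk : 1 ≤ k) :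
    ∑ q ∈ Finset.univ.filter (fun q : (Fin m → Bool) × (Fin m → Bool) =>
        ¬ BadW k q.1 q.2), wt p q.1 * wt p q.2
      = (∑ a ∈ Finset.range k, (m.choose a : ℝ) * (p ^ a * (1 - p) ^ (m - a))) ^ 2
        - ∑ ac ∈ Finset.range k ×ˢ Finset.range k,
          (Nc m k ac.1 ac.2 : ℝ) * (p ^ ac.1 * (1 - p) ^ (m - ac.1)
            * (p ^ ac.2 * (1 - p) ^ (m - ac.2))) := by
  rw [← sum_bad]
  have hsplit := Finset.sum_filter_add_sum_filter_not
    (Finset.univ.filter (fun q : (Fin m → Bool) × (Fin m → Bool) =>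
      cnt q.1 < k ∧ cnt q.2 < k))
    (fun q => BadW k q.1 q.2) (fun q => wt p q.1 * wt p q.2)
  have h1 : (Finset.univ.filter (fun q : (Fin m → Bool) × (Fin m → Bool) =>
      cnt q.1 < k ∧ cnt q.2 < k)).filter (fun q => BadW k q.1 q.2)
      = Finset.univ.filter (fun q : (Fin m → Bool) × (Fin m → Bool) =>
          (cnt q.1 < k ∧ cnt q.2 < k) ∧ BadW k q.1 q.2) := by
    rw [Finset.filter_filter]
  have h2 : (Finset.univ.filter (fun q : (Fin m → Bool) × (Fin m → Bool) =>
      cnt q.1 < k ∧ cnt q.2 < k)).filter (fun q => ¬ BadW k q.1 q.2)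
      = Finset.univ.filter (fun q : (Fin m → Bool) × (Fin m → Bool) =>
          ¬ BadW k q.1 q.2) := by
    rw [Finset.filter_filter]
    apply Finset.filter_congr
    intro q _
    constructor
    · rintro ⟨-, h⟩; exact h
    · intro h; exact ⟨goodP_lt h, h⟩
  have h3 : ∑ q ∈ Finset.univ.filter (fun q : (Fin m → Bool) × (Fin m → Bool) =>
      cnt q.1 < k ∧ cnt q.2 < k), wt p q.1 * wt p q.2
      = (∑ a ∈ Finset.range k, (m.choose a : ℝ) * (p ^ a * (1 - p) ^ (m - a))) ^ 2 := by
    rw [← Finset.univ_product_univ,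
      Finset.filter_product (fun y : Fin m → Bool => cnt y < k) (fun z : Fin m → Bool => cnt z < k),
      Finset.sum_product]
    rw [show (∑ a ∈ Finset.range k, (m.choose a : ℝ) * (p ^ a * (1 - p) ^ (m - a))) ^ 2
        = (∑ y ∈ Finset.univ.filter (fun y : Fin m → Bool => cnt y < k), wt p y) ^ 2 by
      rw [sum_wt_lt]]
    rw [sq, Finset.sum_mul_sum]

  rw [h1, h2, h3] at hsplit
  linarith
end NausAux
namespace NausAux

lemma sum_swap_tri (K : ℕ) (g : ℕ → ℝ) :
    ∑ a ∈ Finset.range K, ∑ i ∈ Finset.range a, g i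
      = ∑ i ∈ Finset.range K, ((K - 1 - i : ℕ) : ℝ) * g i := by
  induction K with
  | zero => simp
  | succ K ih =>
    rw [Finset.sum_range_succ, ih, Finset.sum_range_succ]
    have hlast : ((K + 1 - 1 - K : ℕ) : ℝ) * g K = 0 := by
      have : K + 1 - 1 - K = 0 := by omega
      rw [this]; simp
    rw [hlast, add_zero, ← Finset.sum_add_distrib]
    apply Finset.sum_congr rfl
    intro i hi
    rw [Finset.mem_range] at hi
    have h1 : (K - 1 - i) + 1 = K + 1 - 1 - i := by omega
    have : ((K + 1 - 1 - i : ℕ) : ℝ) = ((K - 1 - i : ℕ) : ℝ) + 1 := by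
      rw [← h1]; push_cast; ring
    rw [this]; ring

variable {m : ℕ} (p : ℝ)

lemma sum_bad_alg (k : ℕ) (hk3 : 3 ≤ k) (hkm : k ≤ m) :
    ∑ ac ∈ Finset.range k ×ˢ Finset.range k,
        (Nc m k ac.1 ac.2 : ℝ) * (p ^ ac.1 * (1 - p) ^ (m - ac.1)
          * (p ^ ac.2 * (1 - p) ^ (m - ac.2)))
      = ((k : ℝ) - 1) * ((m.choose k : ℝ) * p ^ k * (1 - p) ^ (m - k))
          * (∑ i ∈ Finset.range (k - 1), (m.choose i : ℝ) * p ^ i * (1 - p) ^ (m - i))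
        - (m : ℝ) * p * ((m.choose k : ℝ) * p ^ k * (1 - p) ^ (m - k))
          * (∑ i ∈ Finset.range (k - 2), ((m - 1).choose i : ℝ) * p ^ i * (1 - p) ^ (m - 1 - i)) := by
  set g : ℕ → ℝ := fun i => (m.choose k : ℝ) * (m.choose i : ℝ)
    * (p ^ (k + i) * (1 - p) ^ ((m - k) + (m - i))) with hg
  -- Step 1+2: reduce the double sum to a triangular sum
  have step12 : ∑ ac ∈ Finset.range k ×ˢ Finset.range k,
      (Nc m k ac.1 ac.2 : ℝ) * (p ^ ac.1 * (1 - p) ^ (m - ac.1)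
        * (p ^ ac.2 * (1 - p) ^ (m - ac.2)))
      = ∑ a ∈ Finset.range k, ∑ i ∈ Finset.range a, g i := by
    rw [Finset.sum_product]
    apply Finset.sum_congr rfl
    intro a ha
    rw [Finset.mem_range] at ha
    have hinner : ∀ c ∈ Finset.range k,
        (Nc m k a c : ℝ) * (p ^ a * (1 - p) ^ (m - a) * (p ^ c * (1 - p) ^ (m - c)))
        = if k ≤ a + c then g (a + c - k) else 0 := by
      intro c hc
      rw [Finset.mem_range] at hc
      rw [Nc_eq]
      split
      · rename_i hle
        have e1 : k + (a + c - k) = a + c := by omega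
        have e2 : (m - k) + (m - (a + c - k)) = (m - a) + (m - c) := by omega
        have hgv : g (a + c - k) = (m.choose k : ℝ) * (m.choose (a + c - k) : ℝ)
            * (p ^ (a + c) * (1 - p) ^ ((m - a) + (m - c))) := by
          rw [hg]
          simp only
          rw [e1, e2]
        rw [hgv, pow_add, pow_add]
        push_cast
        ring
      · simp
    rw [Finset.sum_congr rfl hinner, ← Finset.sum_filter]
    apply Finset.sum_bij' (fun c _ => a + c - k) (fun i _ => k + i - a)
    · intro c hc
      rw [Finset.mem_filter, Finset.mem_range] at hc
      rw [Finset.mem_range]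
      omega
    · intro i hi
      rw [Finset.mem_range] at hi
      rw [Finset.mem_filter, Finset.mem_range]
      omega
    · intro c hc
      rw [Finset.mem_filter, Finset.mem_range] at hc
      omega
    · intro i hi
      rw [Finset.mem_range] at hi
      omega
    · intro c hc
      rfl
  rw [step12, sum_swap_tri]
  have hdrop : ∀ (K : ℕ) (g : ℕ → ℝ), 1 ≤ K →
      ∑ i ∈ Finset.range K, ((K - 1 - i : ℕ) : ℝ) * g i
        = ∑ i ∈ Finset.range (K - 1), (((K : ℝ) - 1) - (i : ℝ)) * g i := by
    intro K g hK
    obtain ⟨L, rfl⟩ : ∃ L, K = L + 1 := ⟨K - 1, by omega⟩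
    rw [Finset.sum_range_succ]
    simp only [Nat.add_sub_cancel]
    have hzero : ((L - L : ℕ) : ℝ) * g L = 0 := by simp [Nat.sub_self]
    rw [hzero, add_zero]
    apply Finset.sum_congr rfl
    intro i hi
    rw [Finset.mem_range] at hi
    congr 1
    rw [Nat.cast_sub (le_of_lt hi)]
    push_cast
    ring
  rw [hdrop k g (by omega)]
  have hsplit : ∑ i ∈ Finset.range (k - 1), (((k : ℝ) - 1) - (i : ℝ)) * g i
      = (((k : ℝ) - 1)) * ∑ i ∈ Finset.range (k - 1), g i
        - ∑ i ∈ Finset.range (k - 1), (i : ℝ) * g i := by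
    rw [Finset.mul_sum, ← Finset.sum_sub_distrib]
    apply Finset.sum_congr rfl
    intro i _
    ring
  rw [hsplit]
  -- first part
  have hB : ∀ i : ℕ, i ≤ m → g i = ((m.choose k : ℝ) * p ^ k * (1 - p) ^ (m - k))
      * ((m.choose i : ℝ) * p ^ i * (1 - p) ^ (m - i)) := by
    intro i hi
    rw [hg]
    simp only
    rw [pow_add, pow_add]
    ring
  have hfirst : ∑ i ∈ Finset.range (k - 1), g i
      = ((m.choose k : ℝ) * p ^ k * (1 - p) ^ (m - k))
        * (∑ i ∈ Finset.range (k - 1), (m.choose i : ℝ) * p ^ i * (1 - p) ^ (m - i)) := by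
    rw [Finset.mul_sum]
    apply Finset.sum_congr rfl
    intro i hi
    rw [Finset.mem_range] at hi
    exact hB i (by omega)
  -- second part
  have hsecond : ∑ i ∈ Finset.range (k - 1), (i : ℝ) * g i
      = (m : ℝ) * p * ((m.choose k : ℝ) * p ^ k * (1 - p) ^ (m - k))
        * (∑ i ∈ Finset.range (k - 2), ((m - 1).choose i : ℝ) * p ^ i * (1 - p) ^ (m - 1 - i)) := by
    have hk2 : k - 1 = (k - 2) + 1 := by omega
    rw [hk2, Finset.sum_range_succ']
    simp only [Nat.cast_zero, zero_mul, add_zero]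
    rw [Finset.mul_sum]
    apply Finset.sum_congr rfl
    intro i hi
    rw [Finset.mem_range] at hi
    have him : i + 1 ≤ m := by omega
    have hnat : (i + 1) * m.choose (i + 1) = m * (m - 1).choose i := by
      have h := Nat.add_one_mul_choose_eq (m - 1) i
      have hm1 : m - 1 + 1 = m := by omega
      rw [hm1] at h
      rw [Nat.mul_comm]
      exact h.symm
    have hgv := hB (i + 1) him
    rw [hgv]
    have hcast : ((i : ℝ) + 1) * (m.choose (i + 1) : ℝ) = (m : ℝ) * ((m - 1).choose i : ℝ) := by
      have := congrArg (fun n : ℕ => (n : ℝ)) hnat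
      push_cast at this
      linarith [this]
    have hexp : (m : ℕ) - (i + 1) = m - 1 - i := by omega
    push_cast
    rw [pow_succ]
    calc ((i : ℝ) + 1) * ((m.choose k : ℝ) * p ^ k * (1 - p) ^ (m - k)
          * ((m.choose (i + 1) : ℝ) * (p ^ i * p) * (1 - p) ^ (m - (i + 1))))
        = (((i : ℝ) + 1) * (m.choose (i + 1) : ℝ)) * ((m.choose k : ℝ) * p ^ k * (1 - p) ^ (m - k)
          * ((p ^ i * p) * (1 - p) ^ (m - (i + 1)))) := by ring
      _ = ((m : ℝ) * ((m - 1).choose i : ℝ)) * ((m.choose k : ℝ) * p ^ k * (1 - p) ^ (m - k)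
          * ((p ^ i * p) * (1 - p) ^ (m - (i + 1)))) := by rw [hcast]
      _ = (m : ℝ) * p * ((m.choose k : ℝ) * p ^ k * (1 - p) ^ (m - k))
          * (((m - 1).choose i : ℝ) * p ^ i * (1 - p) ^ (m - 1 - i)) := by
          rw [hexp]; ring
  rw [hfirst, hsecond]
  ring

end NausAux
namespace NausAux

variable {m : ℕ} (p : ℝ)

lemma final_sum (k : ℕ) (hk3 : 3 ≤ k) :
    ∑ q ∈ Finset.univ.filter (fun q : (Fin m → Bool) × (Fin m → Bool) => ¬ BadW k q.1 q.2),
      wt p q.1 * wt p q.2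
    = (∑ a ∈ Finset.range k, (m.choose a : ℝ) * (p ^ a * (1 - p) ^ (m - a))) ^ 2
      - (((k : ℝ) - 1) * ((m.choose k : ℝ) * p ^ k * (1 - p) ^ (m - k))
          * (∑ i ∈ Finset.range (k - 1), (m.choose i : ℝ) * p ^ i * (1 - p) ^ (m - i))
        - (m : ℝ) * p * ((m.choose k : ℝ) * p ^ k * (1 - p) ^ (m - k))
          * (∑ i ∈ Finset.range (k - 2), ((m - 1).choose i : ℝ) * p ^ i * (1 - p) ^ (m - 1 - i))) := by
  rw [sum_good p k (by omega)]
  congr 1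
  by_cases hkm : k ≤ m
  · exact sum_bad_alg p k hk3 hkm
  · have hch : m.choose k = 0 := Nat.choose_eq_zero_of_lt (by omega)
    have hz : ∑ ac ∈ Finset.range k ×ˢ Finset.range k,
        (Nc m k ac.1 ac.2 : ℝ) * (p ^ ac.1 * (1 - p) ^ (m - ac.1)
          * (p ^ ac.2 * (1 - p) ^ (m - ac.2))) = 0 := by
      apply Finset.sum_eq_zero
      intro ac _
      rw [Nc_eq]
      split
      · rw [hch]
        simp
      · simp
    rw [hz, hch]
    norm_num

lemma prod_wseq (y z : Fin m → Bool) :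
    ∏ i ∈ Finset.range (2 * m), (if wseq y z i = true then p else 1 - p)
      = wt p y * wt p z := by
  rw [two_mul, Finset.prod_range_add]
  congr 1
  · rw [← Fin.prod_univ_eq_prod_range (fun i => if wseq y z i = true then p else 1 - p) m]
    unfold wt
    apply Finset.prod_congr rfl
    intro j _
    have : wseq y z (j : ℕ) = y j := by
      unfold wseq extF
      rw [if_pos j.2, dif_pos j.2]
    rw [this]
  · rw [← Fin.prod_univ_eq_prod_range (fun i => if wseq y z (m + i) = true then p else 1 - p) m]
    unfold wt
    apply Finset.prod_congr rfl
    intro j _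
    have : wseq y z (m + (j : ℕ)) = z j := by
      unfold wseq extF
      rw [if_neg (by omega)]
      have h1 : m + (j : ℕ) - m = (j : ℕ) := by omega
      rw [h1, dif_pos j.2]
    rw [this]

end NausAux
open MeasureTheory ProbabilityTheory

/-- Naus's exact formula: the probability that `2m` i.i.d. Bernoulli(p) trials contain no
window of `m` consecutive trials with `k` or more successes (for `2 < k < 2m`) equals
`Q₂' = F_b(k-1;m,p)² - (k-1)·b(k;m,p)·F_b(k-2;m,p) + m·p·b(k;m,p)·F_b(k-3;m-1,p)`. -/
theorem stmt_9 {Ω : Type*} [MeasurableSpace Ω] (μ : Measure Ω) [IsProbabilityMeasure μ]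
    (p : ℝ) (hp0 : 0 < p) (hp1 : p < 1)
    (m k : ℕ) (hk2 : 2 < k) (hk2m : k < 2 * m)
    (X : ℕ → Ω → Bool) (hmeas : ∀ i, Measurable (X i))
    (hindep : iIndepFun X μ)
    (hbern : ∀ i, μ {ω | X i ω = true} = ENNReal.ofReal p)
    (b : ℕ → ℝ) (hb : ∀ j, b j = (m.choose j : ℝ) * p ^ j * (1 - p) ^ (m - j))
    (Fb : ℕ → ℕ → ℝ)
    (hFb : ∀ r s, Fb r s =
      ∑ i ∈ Finset.range (r + 1), (s.choose i : ℝ) * p ^ i * (1 - p) ^ (s - i)) :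
    μ {ω | ¬ ∃ i, i + m ≤ 2 * m ∧
        k ≤ ((Finset.range m).filter (fun j => X (i + j) ω = true)).card}
      = ENNReal.ofReal (Fb (k - 1) m ^ 2 - ((k : ℝ) - 1) * b k * Fb (k - 2) m
          + (m : ℝ) * p * b k * Fb (k - 3) (m - 1)) := by
  classical
  have hm2 : 2 ≤ m := by omega
  have hp0' : (0 : ℝ) ≤ p := le_of_lt hp0
  have hp1' : (0 : ℝ) ≤ 1 - p := by linarith
  set pr : (Fin m → Bool) × (Fin m → Bool) → Set Ω :=
    fun q => ⋂ i ∈ Finset.range (2 * m), X i ⁻¹' {NausAux.wseq q.1 q.2 i} with hpr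
  set Qg : Finset ((Fin m → Bool) × (Fin m → Bool)) :=
    Finset.univ.filter (fun q => ¬ NausAux.BadW k q.1 q.2) with hQg
  -- membership in a cylinder determines the pair
  have hcylmem : ∀ (ω : Ω) (q : (Fin m → Bool) × (Fin m → Bool)), ω ∈ pr q →
      q.1 = (fun j : Fin m => X (j : ℕ) ω) ∧ q.2 = (fun j : Fin m => X (m + (j : ℕ)) ω) := by
    intro ω q hω
    rw [hpr] at hω
    simp only [Set.mem_iInter, Set.mem_preimage, Set.mem_singleton_iff] at hω
    constructor
    · funext j
      have h := hω (j : ℕ) (Finset.mem_range.2 (by omega))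
      have hw : NausAux.wseq q.1 q.2 (j : ℕ) = q.1 j := by
        unfold NausAux.wseq NausAux.extF
        rw [if_pos j.2, dif_pos j.2]
      rw [hw] at h
      exact h.symm
    · funext j
      have h := hω (m + (j : ℕ)) (Finset.mem_range.2 (by omega))
      have hw : NausAux.wseq q.1 q.2 (m + (j : ℕ)) = q.2 j := by
        unfold NausAux.wseq NausAux.extF
        rw [if_neg (by omega)]
        have h1 : m + (j : ℕ) - m = (j : ℕ) := by omega
        rw [h1, dif_pos j.2]
      rw [hw] at h
      exact h.symm
  -- the event as a disjoint union of cylinders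
  have hset : {ω : Ω | ¬ ∃ i, i + m ≤ 2 * m ∧
      k ≤ ((Finset.range m).filter (fun j => X (i + j) ω = true)).card}
      = ⋃ q ∈ Qg, pr q := by
    ext ω
    set yω : Fin m → Bool := fun j : Fin m => X (j : ℕ) ω with hyω
    set zω : Fin m → Bool := fun j : Fin m => X (m + (j : ℕ)) ω with hzω
    have hw : ∀ i : ℕ, i < 2 * m → NausAux.wseq yω zω i = X i ω := by
      intro i hi
      unfold NausAux.wseq NausAux.extF
      split
      · rfl
      · rename_i h
        rw [dif_pos (show i - m < m by omega)]
        show X (m + (i - m)) ω = X i ω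
        congr 1
        omega
    have hwin : ∀ i : ℕ, i ≤ m → NausAux.win yω zω i
        = ((Finset.range m).filter (fun j => X (i + j) ω = true)).card := by
      intro i hi
      unfold NausAux.win
      congr 1
      apply Finset.filter_congr
      intro j hj
      rw [Finset.mem_range] at hj
      rw [hw (i + j) (by omega)]
    constructor
    · intro hgood
      simp only [Set.mem_setOf_eq] at hgood
      apply Set.mem_biUnion (show (yω, zω) ∈ Qg from ?_)
      · rw [hpr]
        simp only [Set.mem_iInter, Set.mem_preimage, Set.mem_singleton_iff]
        intro i hi
        rw [Finset.mem_range] at hi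
        exact (hw i hi).symm
      · rw [hQg, Finset.mem_filter]
        refine ⟨Finset.mem_univ _, ?_⟩
        rintro ⟨i, him, hwi⟩
        exact hgood ⟨i, by omega, by rw [← hwin i him]; exact hwi⟩
    · intro hω
      rw [Set.mem_iUnion] at hω
      obtain ⟨q, hq⟩ := hω
      rw [Set.mem_iUnion] at hq
      obtain ⟨hqQ, hqm⟩ := hq
      obtain ⟨h1, h2⟩ := hcylmem ω q hqm
      rw [hQg, Finset.mem_filter] at hqQ
      simp only [Set.mem_setOf_eq]
      rintro ⟨i, him, hwi⟩
      apply hqQ.2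
      refine ⟨i, by omega, ?_⟩
      rw [h1, h2, ← hyω, ← hzω, hwin i (by omega)]
      exact hwi
  -- measure of each cylinder
  have hfac : ∀ (i : ℕ) (bb : Bool), μ (X i ⁻¹' {bb})
      = ENNReal.ofReal (if bb = true then p else 1 - p) := by
    intro i bb
    have htrue : X i ⁻¹' {true} = {ω | X i ω = true} := by
      ext ω; simp
    cases bb
    · have hfalse : X i ⁻¹' {false} = {ω | X i ω = true}ᶜ := by
        ext ω
        simp only [Set.mem_preimage, Set.mem_singleton_iff, Set.mem_compl_iff, Set.mem_setOf_eq]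
        cases h : X i ω <;> simp
      rw [hfalse, measure_compl (by rw [← htrue]; exact hmeas i (measurableSet_singleton true))
        (measure_ne_top μ _)]
      rw [hbern i]
      simp only [Bool.false_eq_true, if_false]
      rw [ENNReal.ofReal_sub 1 hp0', ENNReal.ofReal_one]
      rw [measure_univ]
    · rw [if_pos rfl, htrue, hbern i]
  have hcyl : ∀ q : (Fin m → Bool) × (Fin m → Bool),
      μ (pr q) = ENNReal.ofReal (NausAux.wt p q.1 * NausAux.wt p q.2) := by
    intro q
    have hind := hindep.measure_inter_preimage_eq_mul (Finset.range (2 * m))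
      (sets := fun i => {NausAux.wseq q.1 q.2 i}) (fun i _ => measurableSet_singleton _)
    rw [hpr]
    simp only
    rw [hind]
    have : ∀ i ∈ Finset.range (2 * m), μ (X i ⁻¹' {NausAux.wseq q.1 q.2 i})
        = ENNReal.ofReal (if NausAux.wseq q.1 q.2 i = true then p else 1 - p) :=
      fun i _ => hfac i _
    rw [Finset.prod_congr rfl this]
    rw [← ENNReal.ofReal_prod_of_nonneg (fun i _ => by split <;> [exact hp0'; exact hp1'])]
    rw [NausAux.prod_wseq]
  -- disjointness
  have hdisj : (Qg : Set ((Fin m → Bool) × (Fin m → Bool))).PairwiseDisjoint pr := by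
    intro q hq q' hq' hne
    rw [Function.onFun, Set.disjoint_left]
    intro ω hω hω'
    apply hne
    have e1 := hcylmem ω q hω
    have e2 := hcylmem ω q' hω'
    apply Prod.ext
    · rw [e1.1, e2.1]
    · rw [e1.2, e2.2]
  -- measurability of cylinders
  have hmeascyl : ∀ q ∈ Qg, MeasurableSet (pr q) := by
    intro q _
    apply MeasurableSet.biInter (Set.to_countable _)
    intro i _
    exact hmeas i (measurableSet_singleton _)
  rw [hset, measure_biUnion_finset hdisj hmeascyl]
  have hterm : ∀ q ∈ Qg, μ (pr q) = ENNReal.ofReal (NausAux.wt p q.1 * NausAux.wt p q.2) :=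
    fun q _ => hcyl q
  rw [Finset.sum_congr rfl hterm]
  rw [← ENNReal.ofReal_sum_of_nonneg (fun q _ =>
    mul_nonneg (NausAux.wt_nonneg p hp0' (by linarith) q.1)
      (NausAux.wt_nonneg p hp0' (by linarith) q.2))]
  congr 1
  rw [hQg, NausAux.final_sum p k (by omega)]
  -- match the formulas
  rw [hb, hFb, hFb, hFb]
  have e1 : k - 1 + 1 = k := by omega
  have e2 : k - 2 + 1 = k - 1 := by omega
  have e3 : k - 3 + 1 = k - 2 := by omega
  rw [e1, e2, e3]
  have hA : ∑ a ∈ Finset.range k, (m.choose a : ℝ) * (p ^ a * (1 - p) ^ (m - a))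
      = ∑ i ∈ Finset.range k, (m.choose i : ℝ) * p ^ i * (1 - p) ^ (m - i) := by
    apply Finset.sum_congr rfl
    intro a _
    ring
  rw [hA]
  ring
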